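/- arXiv:math/0305064 — 5 statements merged into one kernel-verified Lean document; each statement's English description precedes it below -/
import Mathlib

section
/- Let K be a field of characteristic 2 and let β, γ, c ∈ K. If there exists a rational function f in the rational function field K(x) such that f² + f = β·x⁻¹ + γ·x + c, then β = 0, γ = 0, and there exists a ∈ K with c = a² + a. -/
/-!
Write `f = p / q` in lowest terms. Clearing denominators in `X (f² + f) = β + c X + γ X²` gives
`q² ∣ X · p (p + q)`, and `q` is coprime to `p (p + q)`, so the square `q²` divides `X`: hence
`q = 1` and `f = p` is a polynomial. Then `β = 0` (the constant term of `X (p² + p)`), and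
`p² + p = γ X + c` forces `2 deg p ≤ 1`, so `p = a` is constant, `γ = 0` and `c = a² + a`.
-/

open Polynomial

namespace RatFunc
variable {K : Type*} [Field K]

theorem denom_sq_dvd_of_mul_sq_add_self_eq {f : RatFunc K} {s r : K[X]}
    (h : algebraMap K[X] (RatFunc K) s * (f ^ 2 + f) = algebraMap K[X] (RatFunc K) r) :
    f.denom ^ 2 ∣ s := by
  have hdvd : f.denom ^ 2 ∣ f.num * (f.num + f.denom) * s := by
    rw [← num_div_denom f] at h
    field_simp [algebraMap_ne_zero f.denom_ne_zero] at h
    refine ⟨r, algebraMap_injective K ?_⟩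
    simp only [map_mul, map_add, map_pow]
    linear_combination h
  have hcop : IsCoprime f.denom f.num := f.isCoprime_num_denom.symm
  have hcop' : IsCoprime f.denom (f.num + f.denom) := by
    simpa using hcop.add_mul_left_right 1
  exact (hcop.mul_right hcop').pow_left.dvd_of_dvd_mul_left hdvd

theorem eq_algebraMap_num_of_X_mul_sq_add_self_eq {f : RatFunc K} {r : K[X]}
    (h : X * (f ^ 2 + f) = algebraMap K[X] (RatFunc K) r) :
    f = algebraMap K[X] (RatFunc K) f.num := by
  rw [← algebraMap_X] at h
  have hdvd := denom_sq_dvd_of_mul_sq_add_self_eq h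
  have hdeg := natDegree_le_of_dvd hdvd Polynomial.X_ne_zero
  rw [natDegree_pow, natDegree_X] at hdeg
  have hq : f.denom = 1 := f.monic_denom.natDegree_eq_zero.mp (by omega)
  rw [← num_div_denom f, hq, map_one, div_one, num_algebraMap]

end RatFunc

namespace Polynomial
variable {K : Type*} [Field K]

theorem natDegree_sq_add_self (p : K[X]) : (p ^ 2 + p).natDegree = 2 * p.natDegree := by
  rcases Nat.eq_zero_or_pos p.natDegree with hp | hp
  · rw [eq_C_of_natDegree_eq_zero hp, ← C_pow, ← C_add, natDegree_C, natDegree_C]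
  · have hlt : p.natDegree < (p ^ 2).natDegree := by rw [natDegree_pow]; omega
    rw [natDegree_add_eq_left_of_natDegree_lt hlt, natDegree_pow]

theorem eq_zero_and_exists_of_sq_add_self_eq_C_mul_X_add_C {p : K[X]} {γ c : K}
    (h : p ^ 2 + p = C γ * X + C c) : γ = 0 ∧ ∃ a : K, c = a ^ 2 + a := by
  have hdeg : p.natDegree = 0 := by
    have : (C γ * X + C c).natDegree ≤ 1 := by compute_degree
    rw [← h, natDegree_sq_add_self] at this
    omega
  obtain ⟨a, rfl⟩ := natDegree_eq_zero.mp hdeg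
  rw [← C_pow, ← C_add] at h
  refine ⟨?_, a, ?_⟩
  · simpa [-map_add, -map_pow] using (congrArg (coeff · 1) h).symm
  · simpa [-map_add, -map_pow] using (congrArg (coeff · 0) h).symm

end Polynomial

theorem stmt0_general (K : Type*) [Field K] (β γ c : K)
    (h : ∃ f : RatFunc K,
      f ^ 2 + f = RatFunc.C β * (RatFunc.X)⁻¹ + RatFunc.C γ * RatFunc.X + RatFunc.C c) :
    β = 0 ∧ γ = 0 ∧ ∃ a : K, c = a ^ 2 + a := by
  obtain ⟨f, hf⟩ := h
  have hXf : RatFunc.X * (f ^ 2 + f)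
      = algebraMap K[X] (RatFunc K) (C β + C γ * X ^ 2 + C c * X) := by
    rw [hf]
    simp only [map_add, map_mul, map_pow, RatFunc.algebraMap_C, RatFunc.algebraMap_X]
    field_simp [RatFunc.X_ne_zero]
  have hpoly : X * (f.num ^ 2 + f.num) = C β + C γ * X ^ 2 + C c * X := by
    apply RatFunc.algebraMap_injective K
    rw [← hXf, RatFunc.eq_algebraMap_num_of_X_mul_sq_add_self_eq hXf]
    simp
  have hβ : β = 0 := by simpa using (congrArg (eval 0) hpoly).symm
  rw [hβ, map_zero, zero_add] at hpoly
  have hpoly' : f.num ^ 2 + f.num = C γ * X + C c := by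
    apply mul_left_cancel₀ (X_ne_zero (R := K))
    linear_combination hpoly
  exact ⟨hβ, eq_zero_and_exists_of_sq_add_self_eq_C_mul_X_add_C hpoly'⟩

/-- Let `K` be a field of characteristic 2 and `β, γ, c ∈ K`. If there exists a rational
function `f ∈ K(x)` with `f² + f = β·x⁻¹ + γ·x + c`, then `β = 0`, `γ = 0` and
`c = a² + a` for some `a ∈ K`. -/
theorem stmt0 (K : Type*) [Field K] [CharP K 2] (β γ c : K)
    (h : ∃ f : RatFunc K,
      f ^ 2 + f = RatFunc.C β * (RatFunc.X)⁻¹ + RatFunc.C γ * RatFunc.X + RatFunc.C c) :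
    β = 0 ∧ γ = 0 ∧ ∃ a : K, c = a ^ 2 + a :=
  stmt0_general K β γ c h
end

section
/- Let F be a field, V a finite-dimensional F-vector space, τ and π endomorphisms of V with π bijective, and p ∈ F[T] a polynomial such that τ ∘ π = π ∘ p(τ) (where p(τ) denotes the evaluation of p at τ). Assume τ is diagonalizable. Then for every eigenvalue λ of τ, π maps the λ-eigenspace of τ onto the p(λ)-eigenspace of τ: π(ker(τ − λ·id)) = ker(τ − p(λ)·id). -/
/-- Let `V` be a finite-dimensional vector space over a field `F`, `τ, π` endomorphisms
with `π` bijective and `τ ∘ π = π ∘ p(τ)` for a polynomial `p`. If `τ` is diagonalizable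
(i.e. `V` is the (direct) sum of the eigenspaces of `τ`), then for every eigenvalue `λ`
of `τ`, `π` maps the `λ`-eigenspace of `τ` onto the `p(λ)`-eigenspace of `τ`. -/
theorem stmt1 (F V : Type*) [Field F] [AddCommGroup V] [Module F V] [FiniteDimensional F V]
    (τ π : Module.End F V) (hπ : Function.Bijective π) (p : Polynomial F)
    (hcomm : τ * π = π * Polynomial.aeval τ p)
    (hdiag : (⨆ μ : F, τ.eigenspace μ) = ⊤) :
    ∀ lam : F, τ.HasEigenvalue lam →
      Submodule.map π (τ.eigenspace lam) = τ.eigenspace (p.eval lam) := by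
  classical
  -- π maps each eigenspace μ into eigenspace p(μ)
  have hmap : ∀ μ : F, Submodule.map π (τ.eigenspace μ) ≤ τ.eigenspace (p.eval μ) := by
    intro μ
    rintro _ ⟨v, hv, rfl⟩
    rw [Module.End.mem_eigenspace_iff]
    have h1 : τ (π v) = π (Polynomial.aeval τ p v) := by
      have := congrArg (fun f : Module.End F V => f v) hcomm
      simpa using this
    rcases eq_or_ne v 0 with rfl | hv0
    · simp
    · rw [h1, Module.End.aeval_apply_of_hasEigenvector ⟨hv, hv0⟩, map_smul]
  -- p maps eigenvalues to eigenvalues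
  have hq : ∀ μ : F, τ.HasEigenvalue μ → τ.HasEigenvalue (p.eval μ) := by
    intro μ hμ
    obtain ⟨v, hv, hv0⟩ := hμ.exists_hasEigenvector
    refine Module.End.hasEigenvalue_of_hasEigenvector (x := π v) ⟨hmap μ ⟨v, hv, rfl⟩, ?_⟩
    intro h
    exact hv0 (hπ.1 (by simpa using h))
  -- finite set of eigenvalues
  set s : Finset F := τ.finite_hasEigenvalue.toFinset with hs
  have hmem : ∀ μ : F, μ ∈ s ↔ τ.HasEigenvalue μ := by
    intro μ; rw [hs, Set.Finite.mem_toFinset]; rfl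
  -- the map μ ↦ p.eval μ is surjective on s
  have hsurj : ∀ ν ∈ s, ∃ μ ∈ s, p.eval μ = ν := by
    intro ν hν
    by_contra hcon
    push_neg at hcon
    have hν' : τ.HasEigenvalue ν := (hmem ν).1 hν
    -- the image of ⊤ under π is contained in the sup of eigenspaces other than ν
    have htop : (⊤ : Submodule F V) ≤ ⨆ μ : F, ⨆ _ : μ ≠ ν, τ.eigenspace μ := by
      have h1 : Submodule.map π ⊤ = ⊤ := by
        rw [Submodule.map_top, LinearMap.range_eq_top.2 hπ.2]
      rw [← h1, ← hdiag, Submodule.map_iSup]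
      refine iSup_le fun μ => ?_
      rcases Classical.em (τ.HasEigenvalue μ) with hμ | hμ
      · have hne : p.eval μ ≠ ν := fun h => hcon μ ((hmem μ).2 hμ) h
        exact le_trans (hmap μ) (le_iSup_of_le (p.eval μ) (by simp [hne]))
      · have : τ.eigenspace μ = ⊥ := by
          by_contra h; exact hμ h
        rw [this, Submodule.map_bot]
        exact bot_le
    have hind := (Module.End.eigenspaces_iSupIndep τ) ν
    have : τ.eigenspace ν ≤ ⊥ := hind le_rfl (le_trans le_top htop)
    exact hν' (le_bot_iff.1 this)
  -- hence the map is a bijection of s, since s is finite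
  have himg : Finset.image (fun μ => p.eval μ) s = s := by
    apply Finset.Subset.antisymm
    · intro ν hν
      obtain ⟨μ, hμ, rfl⟩ := Finset.mem_image.1 hν
      exact (hmem _).2 (hq μ ((hmem μ).1 hμ))
    · intro ν hν
      obtain ⟨μ, hμ, hμν⟩ := hsurj ν hν
      exact Finset.mem_image.2 ⟨μ, hμ, hμν⟩
  have hinj : Set.InjOn (fun μ => p.eval μ) s := by
    have := Finset.card_image_iff.1 (by rw [himg])
    simpa using this
  -- finrank of eigenspace μ ≤ finrank of eigenspace (p.eval μ)
  have hrank_le : ∀ μ : F, Module.finrank F (τ.eigenspace μ) ≤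
      Module.finrank F (τ.eigenspace (p.eval μ)) := by
    intro μ
    calc Module.finrank F (τ.eigenspace μ)
        = Module.finrank F (Submodule.map π (τ.eigenspace μ)) :=
          (LinearEquiv.finrank_eq (Submodule.equivMapOfInjective π hπ.1 _))
      _ ≤ Module.finrank F (τ.eigenspace (p.eval μ)) := Submodule.finrank_mono (hmap μ)
  -- sums over s are equal by reindexing
  have hsum : ∑ μ ∈ s, Module.finrank F (τ.eigenspace (p.eval μ)) =
      ∑ μ ∈ s, Module.finrank F (τ.eigenspace μ) := by
    rw [← Finset.sum_image (f := fun ν => Module.finrank F (τ.eigenspace ν))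
      (fun x hx y hy h => hinj hx hy h), himg]
  -- pointwise equality of finranks
  have hrank_eq : ∀ μ ∈ s, Module.finrank F (τ.eigenspace μ) =
      Module.finrank F (τ.eigenspace (p.eval μ)) := by
    have := (Finset.sum_eq_sum_iff_of_le (s := s)
      (f := fun μ => Module.finrank F (τ.eigenspace μ))
      (g := fun μ => Module.finrank F (τ.eigenspace (p.eval μ)))
      (fun μ _ => hrank_le μ)).1 hsum.symm
    exact fun μ hμ => this μ hμ
  intro lam hlam
  apply Submodule.eq_of_le_of_finrank_eq (hmap lam)
  rw [← LinearEquiv.finrank_eq (Submodule.equivMapOfInjective π hπ.1 _)]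
  exact hrank_eq lam ((hmem lam).2 hlam)
end

section
/- Let F be a field, V a finite-dimensional F-vector space, m ≥ 1, and suppose V = W₀ ⊕ W₁ ⊕ ⋯ ⊕ W_{m−1} is a direct sum of subspaces. Let π be a linear automorphism of V such that π(W_i) = W_{i+1 mod m} for all i. Then there exists a polynomial f ∈ F[T] of degree dim W₀ such that the characteristic polynomial of π equals f(T^m). -/
/-!
Grade a basis adapted to `V = ⨁ Wᵢ` by `ZMod m`; the matrix of `π` raises the degree by `1`.
A nonzero term `∏ M (σ i) i` of the permutation expansion of a `k × k` principal minor then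
permutes indices whose degrees all go up by `1`, so `k • 1 = 0` in `ZMod m`, i.e. `m ∣ k`.
By the principal-minor formula for the coefficients of the characteristic polynomial, only the
coefficients of `T^d` with `m ∣ dim V - d` survive. Finally `π` is onto, since its image
contains every `Wᵢ`, so all `Wᵢ` have the same dimension and `dim V = m · dim W₀`.
-/

open Polynomial Module

namespace Matrix

variable {ι κ R G : Type*}

def IsHomogeneous [Zero R] [Add G] (w : ι → G) (g : G) (M : Matrix ι ι R) : Prop :=
  ∀ i j, M i j ≠ 0 → w i = w j + g

variable {w : ι → G} {g : G}

theorem IsHomogeneous.submatrix [Zero R] [Add G] {M : Matrix ι ι R} (hM : M.IsHomogeneous w g)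
    (e : κ → ι) : (M.submatrix e e).IsHomogeneous (w ∘ e) g :=
  fun i j => hM (e i) (e j)

variable [CommRing R] {M : Matrix ι ι R}

theorem IsHomogeneous.card_nsmul_eq_zero [AddCancelCommMonoid G] [Fintype ι] [DecidableEq ι]
    (hM : M.IsHomogeneous w g) (hdet : M.det ≠ 0) : Fintype.card ι • g = 0 := by
  rw [det_apply] at hdet
  obtain ⟨σ, -, hσ⟩ := Finset.exists_ne_zero_of_sum_ne_zero hdet
  have hentries : ∀ i, M (σ i) i ≠ 0 := fun i h => hσ <| by
    rw [Finset.prod_eq_zero (f := fun j => M (σ j) j) (Finset.mem_univ i) h, smul_zero]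
  -- summing `w (σ i) = w i + g` over `i`, the permutation `σ` cancels out
  have hsum : ∑ i, w i + Fintype.card ι • g = ∑ i, w i + 0 := by
    rw [add_zero, ← Finset.card_univ, ← Finset.sum_const, ← Finset.sum_add_distrib]
    calc ∑ i, (w i + g) = ∑ i, w (σ i) :=
          Finset.sum_congr rfl fun i _ => (hM _ _ (hentries i)).symm
      _ = ∑ i, w i := Equiv.sum_comp σ w
  exact add_left_cancel hsum

theorem IsHomogeneous.nsmul_eq_zero_of_coeff_charpoly_ne_zero [AddCancelCommMonoid G]
    [Fintype ι] [DecidableEq ι] (hM : M.IsHomogeneous w g) {k : ℕ} (hk : k ≤ Fintype.card ι)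
    (hcoeff : M.charpoly.coeff (Fintype.card ι - k) ≠ 0) : k • g = 0 := by
  rw [charpoly_coeff_eq_sum_minors M k hk] at hcoeff
  obtain ⟨s, hs, hdet⟩ := Finset.exists_ne_zero_of_sum_ne_zero (right_ne_zero_of_mul hcoeff)
  rw [← (Finset.mem_powersetCard.mp hs).2, ← Fintype.card_coe]
  exact (hM.submatrix _).card_nsmul_eq_zero hdet

theorem IsHomogeneous.coeff_charpoly_eq_zero {m : ℕ} [Fintype ι] [DecidableEq ι]
    {w : ι → ZMod m} (hM : M.IsHomogeneous w 1) (hcard : m ∣ Fintype.card ι) {d : ℕ}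
    (hd : ¬ m ∣ d) : M.charpoly.coeff d = 0 := by
  nontriviality R
  by_contra hcoeff
  have hle : d ≤ Fintype.card ι :=
    M.charpoly_natDegree_eq_dim ▸ le_natDegree_of_ne_zero hcoeff
  rw [← Nat.sub_sub_self hle] at hcoeff
  have hsmul := hM.nsmul_eq_zero_of_coeff_charpoly_ne_zero (Nat.sub_le _ _) hcoeff
  rw [nsmul_one, ZMod.natCast_eq_zero_iff] at hsmul
  exact hd (by simpa [Nat.sub_sub_self hle] using Nat.dvd_sub hcard hsmul)

end Matrix

theorem Polynomial.expand_contract_of_coeff_eq_zero {R : Type*} [CommSemiring R] {p : ℕ}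
    (hp : p ≠ 0) {f : R[X]} (hf : ∀ n, ¬ p ∣ n → f.coeff n = 0) :
    expand R p (contract p f) = f := by
  ext n
  rw [coeff_expand (Nat.pos_of_ne_zero hp), coeff_contract hp]
  split_ifs with h
  · rw [Nat.div_mul_cancel h]
  · exact (hf n h).symm

theorem LinearMap.toMatrix_collectedBasis_isHomogeneous {ι R V : Type*} [Add ι] [Fintype ι]
    [DecidableEq ι] [CommRing R] [AddCommGroup V] [Module R V] {W : ι → Submodule R V}
    (hW : DirectSum.IsInternal W) {κ : ι → Type*} [∀ i, Fintype (κ i)] [∀ i, DecidableEq (κ i)]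
    (b : ∀ i, Basis (κ i) R (W i)) {f : V →ₗ[R] V} {g : ι}
    (hf : ∀ i, Set.MapsTo f (W i) (W (i + g))) :
    (toMatrix (hW.collectedBasis b) (hW.collectedBasis b) f).IsHomogeneous Sigma.fst g := by
  rintro ⟨i, k⟩ q hiq
  by_contra hne
  rw [LinearMap.toMatrix_apply] at hiq
  exact hiq (hW.collectedBasis_repr_of_mem_ne b (Ne.symm hne) (hf _ (hW.collectedBasis_mem b q)))

theorem LinearMap.range_eq_top_of_map_eq_add {ι R V : Type*} [AddGroup ι] [Semiring R]
    [AddCommMonoid V] [Module R V] {W : ι → Submodule R V} (hW : iSup W = ⊤) {f : V →ₗ[R] V}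
    {g : ι} (hmap : ∀ i, Submodule.map f (W i) = W (i + g)) : range f = ⊤ := by
  rw [LinearMap.range_eq_map, ← hW, Submodule.map_iSup]
  simp_rw [hmap]
  exact (Equiv.addRight g).iSup_comp

theorem finrank_eq_finrank_zero_of_map_eq {F V : Type*} [Field F] [AddCommGroup V]
    [Module F V] [FiniteDimensional F V] {m : ℕ} [NeZero m] {W : ZMod m → Submodule F V}
    {π : V →ₗ[F] V} (hW : iSup W = ⊤) (hmap : ∀ i, Submodule.map π (W i) = W (i + 1)) (i : ZMod m) :
    finrank F (W i) = finrank F (W 0) := by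
  have hπ : Function.Injective π := LinearMap.injective_iff_surjective.mpr
    (LinearMap.range_eq_top.mp (LinearMap.range_eq_top_of_map_eq_add hW hmap))
  have hsucc (i : ZMod m) : finrank F (W (i + 1)) = finrank F (W i) := by
    rw [← hmap i]
    exact (Submodule.equivMapOfInjective π hπ (W i)).finrank_eq.symm
  have hnat (k : ℕ) : finrank F (W k) = finrank F (W 0) := by
    induction k with
    | zero => rw [Nat.cast_zero]
    | succ k ih => rw [Nat.cast_succ, hsucc, ih]
  rw [← ZMod.natCast_zmod_val i, hnat]

theorem stmt2_general (F V : Type*) [Field F] [AddCommGroup V] [Module F V] [FiniteDimensional F V]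
    (m : ℕ) (hm : 1 ≤ m) (W : ZMod m → Submodule F V)
    (hW : DirectSum.IsInternal W)
    (π : V →ₗ[F] V)
    (hmap : ∀ i : ZMod m, Submodule.map π (W i) = W (i + 1)) :
    ∃ f : Polynomial F, f.natDegree = Module.finrank F (W 0) ∧
      LinearMap.charpoly π = f.comp (Polynomial.X ^ m) := by
  have : NeZero m := ⟨by omega⟩
  classical
  let b := hW.collectedBasis fun i => finBasis F (W i)
  have hcard : Fintype.card (Σ i : ZMod m, Fin (finrank F (W i))) = m * finrank F (W 0) := by
    simp [Fintype.card_sigma,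
      finrank_eq_finrank_zero_of_map_eq hW.submodule_iSup_eq_top hmap, ZMod.card]
  have hA := LinearMap.toMatrix_collectedBasis_isHomogeneous hW (fun i => finBasis F (W i))
    fun i x hx => hmap i ▸ Submodule.mem_map_of_mem hx
  have hcoeff (d : ℕ) (hd : ¬ m ∣ d) : (LinearMap.charpoly π).coeff d = 0 := by
    rw [← LinearMap.charpoly_toMatrix π b]
    exact hA.coeff_charpoly_eq_zero (hcard ▸ dvd_mul_right m _) hd
  have hexpand := expand_contract_of_coeff_eq_zero (NeZero.ne m) hcoeff
  refine ⟨contract m (LinearMap.charpoly π), ?_, hexpand.symm⟩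
  have hdeg := congrArg natDegree hexpand
  rw [natDegree_expand, LinearMap.charpoly_natDegree, finrank_eq_card_basis b, hcard,
    mul_comm m] at hdeg
  exact Nat.eq_of_mul_eq_mul_right (by omega) hdeg

/-- Let `V = W₀ ⊕ ⋯ ⊕ W_{m-1}` be a finite-dimensional vector space, and `π` a linear
automorphism of `V` with `π(Wᵢ) = W_{i+1 mod m}`. Then the characteristic polynomial of
`π` has the form `f(T^m)` for a polynomial `f` of degree `dim W₀`. -/
theorem stmt2 (F V : Type*) [Field F] [AddCommGroup V] [Module F V] [FiniteDimensional F V]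
    (m : ℕ) (hm : 1 ≤ m) (W : ZMod m → Submodule F V)
    (hW : DirectSum.IsInternal W)
    (π : V →ₗ[F] V) (hπ : Function.Bijective π)
    (hmap : ∀ i : ZMod m, Submodule.map π (W i) = W (i + 1)) :
    ∃ f : Polynomial F, f.natDegree = Module.finrank F (W 0) ∧
      LinearMap.charpoly π = f.comp (Polynomial.X ^ m) :=
  stmt2_general F V m hm W hW π hmap
end

section
/- Let p be an odd prime. In the polynomial ring 𝔽_p[t][x], write (x² + t·x + 1)^((p−1)/2) = Σ_{n=0}^{p−1} c_n x^n, where each c_n ∈ 𝔽_p[t]. Then for every n with 0 ≤ n ≤ (p−1)/2, the polynomial c_n ∈ 𝔽_p[t] is nonzero of degree exactly n. -/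
open Polynomial Finset in
lemma stmt8_aux_expand {R : Type*} [CommRing R] (m n : ℕ) :
    (((X : R[X][X]) ^ 2 + C X * X + 1) ^ m).coeff n
      = ∑ k ∈ range (m + 1),
          Polynomial.C ((m.choose k : R) * ((X ^ 2 + 1 : R[X]) ^ k).coeff (n - (m - k)))
            * (X : R[X]) ^ (m - k)
            * (if m - k ≤ n then 1 else 0) := by
  have h1 : ((X : R[X][X]) ^ 2 + C X * X + 1) = (X ^ 2 + 1) + C X * X := by ring
  rw [h1, add_pow, finset_sum_coeff]
  refine Finset.sum_congr rfl fun k hk => ?_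
  have hX2 : ((X ^ 2 + 1 : R[X][X]))
      = Polynomial.map (C : R →+* R[X]) (X ^ 2 + 1 : R[X]) := by
    simp
  have h2 : (X ^ 2 + 1 : R[X][X]) ^ k * (C X * X) ^ (m - k) * (m.choose k : R[X][X])
      = C ((m.choose k : R[X]) * X ^ (m - k))
          * (Polynomial.map (C : R →+* R[X]) ((X ^ 2 + 1 : R[X]) ^ k) * X ^ (m - k)) := by
    rw [Polynomial.map_pow, ← hX2, map_mul, map_pow, C_eq_natCast]
    ring
  rw [h2, coeff_C_mul, coeff_mul_X_pow', coeff_map]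
  split_ifs with h
  · rw [mul_one]
    simp only [C_mul, C_eq_natCast]
    ring
  · simp

open Polynomial Finset in
lemma stmt8_aux_deg {R : Type*} [CommRing R] (m n : ℕ) :
    ((((X : R[X][X]) ^ 2 + C X * X + 1) ^ m).coeff n).natDegree ≤ n := by
  rw [stmt8_aux_expand]
  apply Polynomial.natDegree_sum_le_of_forall_le
  intro k hk
  split_ifs with h
  · rw [mul_one]
    exact (natDegree_C_mul_X_pow_le _ _).trans h
  · simp

open Polynomial Finset in
lemma stmt8_aux_coeff {R : Type*} [CommRing R] (m n : ℕ) (hn : n ≤ m) :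
    (((((X : R[X][X]) ^ 2 + C X * X + 1) ^ m).coeff n)).coeff n = (m.choose n : R) := by
  rw [stmt8_aux_expand, finset_sum_coeff]
  rw [Finset.sum_eq_single (m - n)]
  · have h1 : m - (m - n) = n := Nat.sub_sub_self hn
    rw [h1]
    simp [coeff_C_mul, coeff_X_pow, coeff_zero_eq_eval_zero, Nat.choose_symm hn]
  · intro k hk hne
    have hk' : k ≤ m := Nat.lt_succ_iff.mp (Finset.mem_range.mp hk)
    have hmk : m - k ≠ n := by
      intro h
      apply hne
      omega
    split_ifs with h
    · rw [mul_one, coeff_C_mul, coeff_X_pow, if_neg (Ne.symm hmk), mul_zero]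
    · simp
  · intro h
    exact absurd (Finset.mem_range.mpr (by omega)) h

open Polynomial in
/-- Let `p` be an odd prime. Writing `(x² + t·x + 1)^((p-1)/2) = Σ cₙ xⁿ` in `𝔽_p[t][x]`,
for every `n ≤ (p-1)/2` the polynomial `cₙ ∈ 𝔽_p[t]` is nonzero of degree exactly `n`. -/
theorem stmt8 (p : ℕ) (hp : p.Prime) (hodd : Odd p) :
    ∀ n ≤ (p - 1) / 2,
      ((X ^ 2 + C (X : Polynomial (ZMod p)) * X + 1) ^ ((p - 1) / 2)).coeff n ≠ 0 ∧
      (((X ^ 2 + C (X : Polynomial (ZMod p)) * X + 1) ^ ((p - 1) / 2)).coeff n).natDegree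
        = n := by
  intro n hn
  haveI : NeZero p := ⟨hp.ne_zero⟩
  have hp2 : 2 ≤ p := hp.two_le
  have hmp : (p - 1) / 2 < p := lt_of_le_of_lt (Nat.div_le_self _ _) (by omega)
  have hchoose : ((((p - 1) / 2).choose n : ZMod p)) ≠ 0 := by
    rw [Ne, ZMod.natCast_eq_zero_iff]
    intro hd
    have hdvd : ((p - 1) / 2).choose n ∣ Nat.factorial ((p - 1) / 2) :=
      ⟨Nat.factorial n * Nat.factorial ((p - 1) / 2 - n), by
        rw [← Nat.choose_mul_factorial_mul_factorial hn, Nat.mul_assoc]⟩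
    have : p ∣ Nat.factorial ((p - 1) / 2) := hd.trans hdvd
    exact absurd ((Nat.Prime.dvd_factorial hp).mp this) (by omega)
  have hc := stmt8_aux_coeff (R := ZMod p) ((p - 1) / 2) n hn
  have hcoeffne :
      ((((X : (ZMod p)[X][X]) ^ 2 + C X * X + 1) ^ ((p - 1) / 2)).coeff n).coeff n ≠ 0 := by
    rw [hc]; exact hchoose
  refine ⟨fun h0 => hcoeffne (by simp [h0]), ?_⟩
  exact le_antisymm (stmt8_aux_deg _ _) (le_natDegree_of_ne_zero hcoeffne)
end

section
/- Let p be an odd prime. In the polynomial ring 𝔽_p[t][x], write (x² + t·x + 1)^((p−1)/2) = Σ_{n=0}^{p−1} c_n x^n, where each c_n ∈ 𝔽_p[t], and set Φ := Π_{n=0}^{(p−1)/2} c_n ∈ 𝔽_p[t]. Then Φ is a nonzero polynomial of degree (p²−1)/8. -/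
open Polynomial

private lemma key10 {R : Type*} [CommRing R] [Nontrivial R] (m : ℕ) : ∀ k : ℕ,
    (((X ^ 2 + C (X : R[X]) * X + 1) ^ m).coeff k).natDegree ≤ k ∧
    (((X ^ 2 + C (X : R[X]) * X + 1) ^ m).coeff k).coeff k = (m.choose k : R) := by
  induction m with
  | zero =>
    intro k
    rcases k with _ | k <;> simp [coeff_one]
  | succ m ih =>
    intro k
    have hrw : (X ^ 2 + C (X : R[X]) * X + 1) ^ (m + 1)
        = ((X ^ 2 + C (X : R[X]) * X + 1) ^ m) * X ^ 2
          + C (X : R[X]) * (((X ^ 2 + C (X : R[X]) * X + 1) ^ m) * X)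
          + ((X ^ 2 + C (X : R[X]) * X + 1) ^ m) := by ring
    rw [hrw]
    set g := (X ^ 2 + C (X : R[X]) * X + 1) ^ m with hg
    rcases k with _ | k
    · simp only [coeff_add, coeff_C_mul, coeff_mul_X_pow', mul_coeff_zero, coeff_X_zero,
        mul_zero, zero_add]
      norm_num
      refine ⟨Nat.le_zero.mp (ih 0).1, ?_⟩
      rw [(ih 0).2]; simp
    · simp only [coeff_add, coeff_C_mul, coeff_mul_X_pow', coeff_X_mul, coeff_mul_X]
      constructor
      · refine (natDegree_add_le _ _).trans (max_le ((natDegree_add_le _ _).trans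
          (max_le ?_ ?_)) (ih (k + 1)).1)
        · split
          · exact ((ih (k + 1 - 2)).1).trans (by omega)
          · simp
        · refine natDegree_mul_le.trans ?_
          have h := (ih k).1
          have hX : (X : R[X]).natDegree = 1 := natDegree_X
          omega
      · have h1 : (if 2 ≤ k + 1 then g.coeff (k + 1 - 2) else 0).coeff (k + 1) = 0 := by
          split
          · exact coeff_eq_zero_of_natDegree_lt (lt_of_le_of_lt (ih (k + 1 - 2)).1 (by omega))
          · simp
        rw [h1, zero_add, (ih k).2, (ih (k + 1)).2, Nat.choose_succ_succ m k]
        push_cast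
        ring

open Polynomial in
/-- Let `p` be an odd prime. Writing `(x² + t·x + 1)^((p-1)/2) = Σ cₙ xⁿ` in `𝔽_p[t][x]`
and setting `Φ := Π_{n=0}^{(p-1)/2} cₙ`, the polynomial `Φ ∈ 𝔽_p[t]` is nonzero of
degree `(p² - 1)/8`. -/
theorem stmt10 (p : ℕ) (hp : p.Prime) (hodd : Odd p) :
    (∏ n ∈ Finset.range ((p - 1) / 2 + 1),
        ((X ^ 2 + C (X : Polynomial (ZMod p)) * X + 1) ^ ((p - 1) / 2)).coeff n) ≠ 0 ∧
    (∏ n ∈ Finset.range ((p - 1) / 2 + 1),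
        ((X ^ 2 + C (X : Polynomial (ZMod p)) * X + 1) ^ ((p - 1) / 2)).coeff n).natDegree
      = (p ^ 2 - 1) / 8 := by
  haveI := Fact.mk hp
  set m := (p - 1) / 2 with hm
  have hmp : m < p := by have := hp.two_le; omega
  -- nonvanishing of binomial coefficients
  have hchoose : ∀ n ≤ m, ((m.choose n : ZMod p)) ≠ 0 := by
    intro n hn h
    rw [ZMod.natCast_eq_zero_iff] at h
    have hdvd : p ∣ m.factorial :=
      dvd_trans (dvd_mul_of_dvd_left (dvd_mul_of_dvd_left h _) _)
        (dvd_of_eq (Nat.choose_mul_factorial_mul_factorial hn))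
    exact absurd (hp.dvd_factorial.mp hdvd) (by omega)
  -- each coefficient is nonzero of degree n
  have hcoeff : ∀ n ∈ Finset.range (m + 1),
      ((X ^ 2 + C (X : Polynomial (ZMod p)) * X + 1) ^ m).coeff n ≠ 0 ∧
      (((X ^ 2 + C (X : Polynomial (ZMod p)) * X + 1) ^ m).coeff n).natDegree = n := by
    intro n hnr
    obtain ⟨h1, h2⟩ := key10 (R := ZMod p) m n
    have hne : (((X ^ 2 + C (X : Polynomial (ZMod p)) * X + 1) ^ m).coeff n).coeff n ≠ 0 := by
      rw [h2]; exact hchoose n (by simpa using Nat.lt_succ_iff.mp (Finset.mem_range.mp hnr))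
    refine ⟨fun h => hne (by simp [h]), le_antisymm h1 (le_natDegree_of_ne_zero hne)⟩
  have hne0 : ∀ n ∈ Finset.range (m + 1),
      ((X ^ 2 + C (X : Polynomial (ZMod p)) * X + 1) ^ m).coeff n ≠ 0 :=
    fun n hn => (hcoeff n hn).1
  refine ⟨Finset.prod_ne_zero_iff.mpr hne0, ?_⟩
  rw [Polynomial.natDegree_prod _ _ hne0]
  rw [Finset.sum_congr rfl fun n hn => (hcoeff n hn).2]
  -- arithmetic
  obtain ⟨k, hpk⟩ := hodd
  have hmk : m = k := by omega
  obtain ⟨c, hc⟩ := Nat.even_mul_succ_self k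
  have hsum : (∑ i ∈ Finset.range (k + 1), i) * 2 = (k + 1) * k := by
    simpa using Finset.sum_range_id_mul_two (k + 1)
  have hp2 : p ^ 2 = 4 * (k * (k + 1)) + 1 := by rw [hpk]; ring
  have hc' : (k + 1) * k = c + c := by rw [Nat.mul_comm]; omega
  rw [hmk]
  omega
end
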